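/- Same setup: the discriminant (determinant of a Gram matrix in any F-basis, taken modulo squares in F^×) of the quadratic form B(v,v') = Tr_{F_i/F}(τ_i(v)v'c_i) on F_i equals Norm_{F_{±i}/F}(-δ_i) modulo F^{×2}, where F_i = F_{±i}(√δ_i). -/

import Mathlib

/-- Auxiliary equivalence splitting `Fin m × Fin 2` as a sum. -/
def sumProdFin2Equiv (m : ℕ) : Fin m ⊕ Fin m ≃ Fin m × Fin 2 where
  toFun := Sum.elim (fun i => (i, 0)) (fun i => (i, 1))
  invFun p := if p.2 = 0 then Sum.inl p.1 else Sum.inr p.1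
  left_inv := by rintro (i | i) <;> simp
  right_inv := by rintro ⟨i, k⟩; fin_cases k <;> simp

/-- the discriminant (Gram determinant modulo squares, in any `F`-basis) of
the form `B(v,v') = Tr_{F_i/F}(τ(v) v' c)` on `F_i = F_{±i}(√δ)` equals
`Norm_{F_{±i}/F}(-δ)` modulo `F^{×2}`. -/
theorem stmt14 {F K L : Type*} [Field F] [CharZero F] [Field K] [Field L]
    [Algebra F K] [Algebra K L] [Algebra F L] [IsScalarTower F K L]
    [FiniteDimensional F L] [FiniteDimensional F K]
    (δ : K) (hδ : δ ≠ 0)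
    (s : L) (hs : s ≠ 0) (hs2 : s ^ 2 = algebraMap K L δ)
    (hgen : ∀ x : L, ∃ a b : K, x = algebraMap K L a + algebraMap K L b * s)
    (τ : L ≃ₐ[K] L) (hτs : τ s = -s)
    (c : K) (hc : c ≠ 0)
    (B : L → L → F)
    (hB : ∀ v v', B v v' = Algebra.trace F L (τ v * v' * algebraMap K L c))
    (n : ℕ) (hn : n = Module.finrank F L) (b : Module.Basis (Fin n) F L) :
    ∃ u : F, u ≠ 0 ∧
      Matrix.det (Matrix.of fun i j => B (b i) (b j))
        = Algebra.norm F (-δ) * u ^ 2 := by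
  classical
  haveI : CharZero K := charZero_of_injective_algebraMap (algebraMap F K).injective
  haveI : CharZero L := charZero_of_injective_algebraMap (algebraMap F L).injective
  -- the K-basis {1, s} of L
  have hli : LinearIndependent K ![1, s] := by
    rw [linearIndependent_fin2]
    refine ⟨hs, fun a ha => ?_⟩
    have ha' : algebraMap K L a * s = 1 := by
      rw [← Algebra.smul_def]; simpa using ha
    have hsk : s = algebraMap K L a⁻¹ := by
      rw [map_inv₀]; exact eq_inv_of_mul_eq_one_left (by rw [mul_comm]; exact ha')
    have : τ s = s := by rw [hsk, AlgEquiv.commutes]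
    rw [hτs] at this
    have h2 : s + s = 0 := add_eq_zero_iff_neg_eq.mpr this
    have : (2 : L) * s = 0 := by rw [two_mul]; exact h2
    rcases mul_eq_zero.mp this with h | h
    · exact two_ne_zero h
    · exact hs h
  have hsp : ⊤ ≤ Submodule.span K (Set.range ![1, s]) := by
    intro x _
    obtain ⟨a, b', hx⟩ := hgen x
    have h1 : (1 : L) ∈ Set.range ![1, s] := ⟨0, rfl⟩
    have h2 : s ∈ Set.range ![1, s] := ⟨1, rfl⟩
    rw [hx, show algebraMap K L a = a • (1 : L) by rw [Algebra.smul_def, mul_one],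
      show algebraMap K L b' * s = b' • s from (Algebra.smul_def _ _).symm]
    exact Submodule.add_mem _ (Submodule.smul_mem _ _ (Submodule.subset_span h1))
      (Submodule.smul_mem _ _ (Submodule.subset_span h2))
  let bL : Module.Basis (Fin 2) K L := Module.Basis.mk hli hsp
  have hbL0 : bL 0 = 1 := by simp [bL]
  have hbL1 : bL 1 = s := by simp [bL]
  haveI : FiniteDimensional K L := Module.Finite.of_basis bL
  have hrank : Module.finrank K L = 2 := by
    rw [Module.finrank_eq_card_basis bL, Fintype.card_fin]
  -- trace of s is zero
  have htrs : Algebra.trace K L s = 0 := by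
    have h1 : Algebra.trace K L (τ s) = Algebra.trace K L s :=
      Algebra.trace_eq_of_algEquiv τ s
    rw [hτs, map_neg] at h1
    have : (2 : K) * Algebra.trace K L s = 0 := by
      rw [two_mul]; linear_combination -h1
    rcases mul_eq_zero.mp this with h | h
    · exact absurd h two_ne_zero
    · exact h
  -- the key trace values
  have key : ∀ k l : Fin 2,
      Algebra.trace K L (τ (bL k) * bL l * algebraMap K L c)
        = ![![2 * c, 0], ![0, -(2 * (δ * c))]] k l := by
    have t00 : Algebra.trace K L (τ (1 : L) * 1 * algebraMap K L c) = 2 * c := by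
      rw [map_one, one_mul, one_mul, Algebra.trace_algebraMap, hrank]
      simp [two_smul, two_mul]
    have t01 : Algebra.trace K L (τ (1 : L) * s * algebraMap K L c) = 0 := by
      rw [map_one, one_mul, show s * algebraMap K L c = c • s by
        rw [Algebra.smul_def, mul_comm], map_smul, htrs, smul_zero]
    have t10 : Algebra.trace K L (τ s * 1 * algebraMap K L c) = 0 := by
      rw [hτs, mul_one, show -s * algebraMap K L c = (-c) • s by
        rw [Algebra.smul_def, map_neg]; ring, map_smul, htrs, smul_zero]
    have t11 : Algebra.trace K L (τ s * s * algebraMap K L c) = -(2 * (δ * c)) := by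
      rw [hτs, show -s * s * algebraMap K L c = algebraMap K L (-(δ * c)) by
        rw [map_neg, map_mul, ← hs2]; ring, Algebra.trace_algebraMap, hrank]
      simp [two_smul]; ring
    intro k l
    fin_cases k <;> fin_cases l <;>
      simp only [Fin.zero_eta, Fin.mk_one, hbL0, hbL1, Matrix.cons_val_zero,
        Matrix.cons_val_one, Matrix.head_cons, Matrix.cons_val', Matrix.empty_val']
    · exact t00
    · exact t01
    · exact t10
    · exact t11
  -- bilinearity data for B
  have hτsmul : ∀ (a : F) (v : L), τ (a • v) = a • τ v := by
    intro a v
    rw [Algebra.smul_def, Algebra.smul_def, map_mul]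
    congr 1
    rw [IsScalarTower.algebraMap_apply F K L, AlgEquiv.commutes]
  let B' : LinearMap.BilinForm F L := LinearMap.mk₂ F B
    (fun m m' np => by
      rw [hB, hB, hB, show τ (m + m') * np * algebraMap K L c
          = τ m * np * algebraMap K L c + τ m' * np * algebraMap K L c by
        rw [map_add]; ring, map_add])
    (fun a m np => by
      rw [hB, hB, hτsmul, Algebra.smul_def, show algebraMap F L a * τ m * np * algebraMap K L c
          = algebraMap F L a * (τ m * np * algebraMap K L c) by ring,
        ← Algebra.smul_def, map_smul])
    (fun m np np' => by
      rw [hB, hB, hB, show τ m * (np + np') * algebraMap K L c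
          = τ m * np * algebraMap K L c + τ m * np' * algebraMap K L c by ring, map_add])
    (fun a m np => by
      rw [hB, hB, Algebra.smul_def, show τ m * (algebraMap F L a * np) * algebraMap K L c
          = algebraMap F L a * (τ m * np * algebraMap K L c) by ring,
        ← Algebra.smul_def, map_smul])
  have hB'apply : ∀ v w, B' v w = B v w := fun v w => rfl
  -- the scaled Gram-entry formula
  have hB2 : ∀ (a a' : K) (v w : L),
      B (a • v) (a' • w)
        = Algebra.trace F K (a * a' * Algebra.trace K L (τ v * w * algebraMap K L c)) := by
    intro a a' v w
    rw [hB]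
    have hτ : τ (a • v) = a • τ v := by
      rw [Algebra.smul_def, Algebra.smul_def, map_mul, AlgEquiv.commutes]
    rw [hτ, Algebra.smul_def, Algebra.smul_def,
      show algebraMap K L a * τ v * (algebraMap K L a' * w) * algebraMap K L c
        = algebraMap K L a * algebraMap K L a' * (τ v * w * algebraMap K L c) by ring,
      ← map_mul, ← Algebra.smul_def, ← Algebra.trace_trace (S := K), map_smul, smul_eq_mul]
  -- the chosen basis of L over F
  set m := Module.finrank F K with hm
  let bK : Module.Basis (Fin m) F K := Module.finBasis F K
  let b₀ : Module.Basis (Fin m × Fin 2) F L := bK.smulTower bL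
  set G : Matrix (Fin m × Fin 2) (Fin m × Fin 2) F :=
    Matrix.of fun p q => B (b₀ p) (b₀ q) with hGdef
  set T : Matrix (Fin m) (Fin m) F := Algebra.traceMatrix F bK with hT
  -- block computation
  have hblock : ∀ α : K,
      Matrix.det (Matrix.of fun i j : Fin m => Algebra.trace F K (bK i * bK j * α))
        = T.det * Algebra.norm F α := by
    intro α
    have hmat : (Matrix.of fun i j : Fin m => Algebra.trace F K (bK i * bK j * α))
        = T * Algebra.leftMulMatrix bK α := by
      ext i j
      rw [Matrix.mul_apply]
      have hexp : bK i * bK j * α = ∑ k, bK.repr (α * bK j) k • (bK i * bK k) := by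
        have : ∑ k, bK.repr (α * bK j) k • (bK i * bK k)
            = bK i * ∑ k, bK.repr (α * bK j) k • bK k := by
          rw [Finset.mul_sum]
          exact Finset.sum_congr rfl fun k _ => (mul_smul_comm _ _ _).symm
        rw [this, Module.Basis.sum_repr]; ring
      rw [Matrix.of_apply, hexp, map_sum]
      refine Finset.sum_congr rfl fun k _ => ?_
      rw [map_smul, smul_eq_mul, hT, Algebra.traceMatrix_apply, Algebra.traceForm_apply,
        Algebra.leftMulMatrix_eq_repr_mul, mul_comm]
    rw [hmat, Matrix.det_mul, Algebra.norm_eq_matrix_det bK α]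
  -- determinant of G
  have hGram : ∀ p q, G p q
      = Algebra.trace F K (bK p.1 * bK q.1 * ![![2 * c, 0], ![0, -(2 * (δ * c))]] p.2 q.2) := by
    rintro ⟨i, k⟩ ⟨j, l⟩
    rw [hGdef, Matrix.of_apply, show b₀ (i, k) = bK i • bL k from Module.Basis.smulTower_apply _ _ _,
      show b₀ (j, l) = bK j • bL l from Module.Basis.smulTower_apply _ _ _, hB2, key]
  have hdetG : G.det
      = Algebra.norm F (-δ) * (T.det * Algebra.norm F (2 * c)) ^ 2 := by
    have hre : G.det = (G.submatrix (sumProdFin2Equiv m) (sumProdFin2Equiv m)).det :=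
      (Matrix.det_submatrix_equiv_self _ _).symm
    have hsub : G.submatrix (sumProdFin2Equiv m) (sumProdFin2Equiv m)
        = Matrix.fromBlocks
          (Matrix.of fun i j : Fin m => Algebra.trace F K (bK i * bK j * (2 * c))) 0 0
          (Matrix.of fun i j : Fin m => Algebra.trace F K (bK i * bK j * (-(2 * (δ * c))))) := by
      ext p q
      rcases p with i | i <;> rcases q with j | j <;>
        simp only [Matrix.submatrix_apply, sumProdFin2Equiv, Equiv.coe_fn_mk, Sum.elim_inl,
          Sum.elim_inr, hGram, Matrix.fromBlocks_apply₁₁, Matrix.fromBlocks_apply₁₂,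
          Matrix.fromBlocks_apply₂₁, Matrix.fromBlocks_apply₂₂, Matrix.of_apply,
          Matrix.cons_val_zero, Matrix.cons_val_one, Matrix.head_cons, Matrix.zero_apply,
          mul_zero, map_zero]
    rw [hre, hsub, Matrix.det_fromBlocks_zero₁₂, hblock, hblock]
    have hfac : (-(2 * (δ * c))) = (-δ) * (2 * c) := by ring
    rw [hfac, map_mul (Algebra.norm F) (-δ) (2 * c)]
    ring
  -- change of basis to `b`
  have hcard : Fintype.card (Fin m × Fin 2) = n := by
    rw [hn, ← Module.finrank_mul_finrank F K L, hrank]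
    simp [mul_comm]
    exact hm
  let eqv : (Fin m × Fin 2) ≃ Fin n := Fintype.equivFinOfCardEq hcard
  let b₁ : Module.Basis (Fin n) F L := b₀.reindex eqv
  have hdetG1 : (LinearMap.BilinForm.toMatrix b₁ B').det = G.det := by
    have : LinearMap.BilinForm.toMatrix b₁ B' = G.submatrix eqv.symm eqv.symm := by
      ext i j
      rw [BilinForm.toMatrix_apply, Matrix.submatrix_apply, hGdef, Matrix.of_apply,
        Module.Basis.reindex_apply, Module.Basis.reindex_apply, hB'apply]
    rw [this, Matrix.det_submatrix_equiv_self]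
  set P : Matrix (Fin n) (Fin n) F := b₁.toMatrix b with hP
  have hPne : P.det ≠ 0 := by
    have h1 : P * b.toMatrix b₁ = 1 := Module.Basis.toMatrix_mul_toMatrix_flip b₁ b
    have := congrArg Matrix.det h1
    rw [Matrix.det_mul, Matrix.det_one] at this
    exact left_ne_zero_of_mul_eq_one this
  have hchange : (LinearMap.BilinForm.toMatrix b B').det = P.det ^ 2 * G.det := by
    have h := BilinForm.toMatrix_mul_basis_toMatrix b₁ b B'
    have := congrArg Matrix.det h
    rw [Matrix.det_mul, Matrix.det_mul, Matrix.det_transpose] at this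
    rw [← this, hdetG1, hP]; ring
  have hTne : T.det ≠ 0 := by
    rw [hT, Algebra.traceMatrix_of_basis]
    exact det_traceForm_ne_zero bK
  have hNne : Algebra.norm F (2 * c) ≠ 0 := by
    rw [Algebra.norm_ne_zero_iff]
    exact mul_ne_zero two_ne_zero hc
  refine ⟨P.det * (T.det * Algebra.norm F (2 * c)), ?_, ?_⟩
  · exact mul_ne_zero hPne (mul_ne_zero hTne hNne)
  · have hGb : Matrix.of (fun i j => B (b i) (b j)) = LinearMap.BilinForm.toMatrix b B' := by
      ext i j
      rw [BilinForm.toMatrix_apply, Matrix.of_apply, hB'apply]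
    rw [hGb, hchange, hdetG]
    ring
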